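/- arXiv:2307.10909 — 4 statements merged into one kernel-verified Lean document; each statement's English description precedes it below -/
import Mathlib

section
/- For 0 ≤ t ≤ 1, set t' = √(1−t²) and ε₀ = (1/(2π))·arcsinh(t'/t) (with ε₀ = +∞ if t = 0). Then for all real ε, ∫₀¹ log| √(1 − t² sin²(2π(θ + iε))) | dθ = log((1+t')/2) + 2π·max{0, |ε| − ε₀}. -/
/-!
With `u = exp (2 i z)` one has `sin² z = (2 - u - u⁻¹) / 4`, and for `z = 2π (θ + i ε)`,
`θ ∈ [0, 1]`, the point `u` runs twice around the circle `|u| = r = e^{-4πε}`. Writing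
`t = 1 / cosh a`, the Laurent polynomial `1 - t² (2 - u - u⁻¹) / 4` factors as
`(t² / 4) u⁻¹ (u + e^{-2a}) (u + e^{2a})`, so the integral is a combination of circle averages of
`log |u + c|`, and each of these equals `log (max r |c|)` by Jensen's formula.
-/

open Real intervalIntegral Filter

section CircleAverage

variable {E : Type*} [NormedAddCommGroup E] [NormedSpace ℝ E] {f : ℂ → E} {c : ℂ} {R : ℝ}

theorem CircleIntegrable.integral_comp_circleMap_mul (hf : CircleIntegrable f c R) {n : ℕ}
    (hn : n ≠ 0) :
    ∫ θ in (0 : ℝ)..1, f (circleMap c R (2 * π * n * θ)) = circleAverage f c R := by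
  have hper : Function.Periodic (fun θ => f (circleMap c R θ)) (2 * π) := fun θ => by
    simp only [periodic_circleMap c R θ]
  have hwind :=
    hper.intervalIntegral_add_zsmul_eq n 0 (hper.intervalIntegrable₀ (by positivity) hf)
  simp only [zero_add, natCast_zsmul, nsmul_eq_mul] at hwind
  rw [integral_comp_mul_left (fun θ => f (circleMap c R θ)) (by positivity), mul_zero, mul_one,
    mul_comm _ (n : ℝ), hwind, ← Nat.cast_smul_eq_nsmul ℝ, smul_smul, circleAverage_def]
  congr 1
  field_simp

end CircleAverage

theorem circleAverage_log_norm_add_const {r : ℝ} (hr : 0 < r) (a : ℂ) :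
    circleAverage (fun z => log ‖z + a‖) 0 r = log (max r ‖a‖) := by
  have h := circleAverage_log_norm_sub_const_eq_log_radius_add_posLog (a := -a) (c := 0) hr.ne'
  simp only [sub_neg_eq_add, zero_add] at h
  rw [h, posLog_eq_log_max_one (by positivity), ← log_mul hr.ne' (by positivity),
    mul_max_of_nonneg _ _ hr.le, mul_one, mul_inv_cancel_left₀ hr.ne']

theorem Complex.sin_sq_eq_exp (z : ℂ) :
    sin z ^ 2 = (2 - exp (2 * z * I) - (exp (2 * z * I))⁻¹) / 4 := by
  rw [sin_sq, cos_sq, Complex.cos, ← exp_neg]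
  ring_nf

theorem one_sub_sq_mul_eq_of_mul_cosh_eq_one {t a : ℝ} (h : t * cosh a = 1) {u : ℂ}
    (hu : u ≠ 0) :
    1 - (t : ℂ) ^ 2 * ((2 - u - u⁻¹) / 4)
      = (t : ℂ) ^ 2 / 4 * u⁻¹ * ((u + rexp (-(2 * a))) * (u + rexp (2 * a))) := by
  have hsum : t ^ 2 * (rexp (2 * a) + rexp (-(2 * a))) = 4 - 2 * t ^ 2 := by
    have h2 := Real.cosh_eq (2 * a)
    have h3 := Real.cosh_two_mul a
    have h4 := Real.cosh_sq_sub_sinh_sq a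
    linear_combination t ^ 2 * (-2 * h2 + 2 * h3 - 2 * h4) + 4 * (t * cosh a + 1) * h
  have hprod : rexp (-(2 * a)) * rexp (2 * a) = 1 := by rw [← Real.exp_add]; simp
  have hsumC : (t : ℂ) ^ 2 * ((rexp (2 * a) : ℂ) + rexp (-(2 * a))) = 4 - 2 * (t : ℂ) ^ 2 := by
    exact_mod_cast hsum
  have hprodC : (rexp (-(2 * a)) : ℂ) * rexp (2 * a) = 1 := by
    exact_mod_cast hprod
  field_simp
  linear_combination (-u) * hsumC - (t : ℂ) ^ 2 * hprodC

theorem circleAverage_log_norm_one_sub_sq_mul {t a r : ℝ} (ht : t * cosh a = 1) (hr : 0 < r) :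
    circleAverage (fun u : ℂ => log ‖1 - (t : ℂ) ^ 2 * ((2 - u - u⁻¹) / 4)‖) 0 r
      = log (t ^ 2 / 4) - log r + log (max r (rexp (-(2 * a)))) + log (max r (rexp (2 * a))) := by
  have ht0 : t ≠ 0 := by rintro rfl; simp at ht
  have hfactor : (fun u : ℂ => log ‖1 - (t : ℂ) ^ 2 * ((2 - u - u⁻¹) / 4)‖)
      =ᶠ[codiscreteWithin (Metric.sphere 0 |r|)] fun u =>
        (log (t ^ 2 / 4) - log r) + (log ‖u + rexp (-(2 * a))‖ + log ‖u + rexp (2 * a)‖) := by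
    filter_upwards [self_mem_codiscreteWithin _, compl_finite_mem_codiscreteWithin
      ((Set.finite_singleton (-(rexp (2 * a) : ℂ))).insert (-(rexp (-(2 * a)) : ℂ)))]
      with u hu hne
    have hu : ‖u‖ = r := by simpa [abs_of_pos hr] using hu
    simp only [Set.mem_compl_iff, Set.mem_insert_iff, Set.mem_singleton_iff, not_or,
      ← add_eq_zero_iff_eq_neg] at hne
    have hA := norm_ne_zero_iff.mpr hne.1
    have hB := norm_ne_zero_iff.mpr hne.2
    have hnorm : ‖(t : ℂ) ^ 2 / 4‖ = t ^ 2 / 4 := by simp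
    rw [one_sub_sq_mul_eq_of_mul_cosh_eq_one ht (norm_pos_iff.mp (hu ▸ hr)), norm_mul,
      norm_mul, norm_mul, norm_inv, hu, hnorm, log_mul (by positivity) (mul_ne_zero hA hB),
      log_mul (by positivity) (by positivity), log_mul hA hB, log_inv]
    ring
  have hint (b : ℂ) : CircleIntegrable (fun u => log ‖u + b‖) 0 r := by
    simpa using circleIntegrable_log_norm_sub_const (a := -b) (c := 0) r
  rw [circleAverage_congr_codiscreteWithin hfactor hr.ne',
    circleAverage_fun_add (f₂ := fun u => log ‖u + _‖ + log ‖u + _‖)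
      (circleIntegrable_const _ _ _) ((hint _).add (hint _)),
    circleAverage_const, circleAverage_fun_add (hint _) (hint _),
    circleAverage_log_norm_add_const hr, circleAverage_log_norm_add_const hr]
  simp only [Complex.norm_real, Real.norm_eq_abs, abs_of_pos (exp_pos _)]
  ring

theorem add_max_add_max_eq_add_max_abs_sub {s a : ℝ} (ha : 0 ≤ a) :
    (2 * s + max (-(2 * s)) (-(2 * a)) + max (-(2 * s)) (2 * a)) / 2 = a + max 0 (|s| - a) := by
  rcases abs_cases s with ⟨hs, _⟩ | ⟨hs, _⟩ <;> rw [hs] <;>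
    rcases le_total s a with h | h <;> rcases le_total (-s) a with h' | h' <;>
    simp only [max_def] <;> split_ifs <;> linarith

theorem integral_log_sqrt_norm_one_sub_sq_mul_sin_sq {t a : ℝ} (ha : 0 ≤ a)
    (h : t * cosh a = 1) (ε : ℝ) :
    ∫ θ in (0 : ℝ)..1, log √‖1 - (t : ℂ) ^ 2 * Complex.sin (2 * π * (θ + ε * Complex.I)) ^ 2‖
      = log (t / 2) + a + max 0 (|2 * π * ε| - a) := by
  set r := rexp (-(2 * (2 * π * ε)))
  set F := fun u : ℂ => log ‖1 - (t : ℂ) ^ 2 * ((2 - u - u⁻¹) / 4)‖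
  have hpoint (θ : ℝ) : log √‖1 - (t : ℂ) ^ 2 * Complex.sin (2 * π * (θ + ε * Complex.I)) ^ 2‖
      = F (circleMap 0 r (2 * π * (2 : ℕ) * θ)) / 2 := by
    have hu : Complex.exp (2 * (2 * π * (θ + ε * Complex.I)) * Complex.I)
        = circleMap 0 r (2 * π * (2 : ℕ) * θ) := by
      rw [circleMap, zero_add, Complex.ofReal_exp, ← Complex.exp_add]
      push_cast
      ring_nf
      rw [Complex.I_sq]
      ring_nf
    rw [log_sqrt (norm_nonneg _), Complex.sin_sq_eq_exp, hu]
  have hF : CircleIntegrable F 0 r :=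
    MeromorphicOn.circleIntegrable_log_norm fun _ _ => by fun_prop
  rw [integral_congr fun θ _ => hpoint θ, intervalIntegral.integral_div,
    hF.integral_comp_circleMap_mul two_ne_zero,
    circleAverage_log_norm_one_sub_sq_mul h (exp_pos _), add_assoc (log (t / 2)),
    ← add_max_add_max_eq_add_max_abs_sub ha, ← exp_monotone.map_max, ← exp_monotone.map_max,
    log_exp, log_exp, log_exp, show t ^ 2 / 4 = (t / 2) ^ 2 by ring, log_pow]
  ring

/-- Jensen-formula computation of the integral of `log |√(1 - t² sin²(2π(θ+iε)))|`
over one period.  Here `|√w| = √|w|`, so the integrand is written as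
`Real.log (Real.sqrt (Complex.abs (...)))`.  The threshold `ε₀ = (1/2π) arcsinh(t'/t)`
is `+∞` when `t = 0`, in which case the correction term `2π max{0,|ε|-ε₀}` vanishes. -/
theorem stmt0 (t ε : ℝ) (ht0 : 0 ≤ t) (ht1 : t ≤ 1) :
    (∫ θ in (0:ℝ)..1,
        Real.log (Real.sqrt (norm
          (1 - (t : ℂ)^2 * (Complex.sin (2 * Real.pi * ((θ : ℂ) + (ε : ℂ) * Complex.I)))^2))))
      = Real.log ((1 + Real.sqrt (1 - t^2)) / 2) +
        (if t = 0 then 0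
         else 2 * Real.pi *
           max 0 (|ε| - (1 / (2 * Real.pi)) * Real.arsinh (Real.sqrt (1 - t^2) / t))) := by
  rcases ht0.eq_or_lt with rfl | ht
  · simp
  rw [if_neg ht.ne']
  set t' := √(1 - t ^ 2)
  set a := arsinh (t' / t)
  have hsqrt : √(1 + (t' / t) ^ 2) = 1 / t := by
    rw [div_pow, sq_sqrt (by nlinarith), ← sqrt_sq (one_div_pos.mpr ht).le]
    congr 1
    field_simp
    ring
  have hcosh : t * cosh a = 1 := by rw [cosh_arsinh, hsqrt, mul_one_div_cancel ht.ne']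
  have hlog : log ((1 + t') / 2) = log (t / 2) + a := by
    rw [← log_exp a, exp_arsinh, hsqrt, ← log_mul (by positivity) (by positivity)]
    congr 1
    field_simp
    ring
  have hscale : 2 * π * max 0 (|ε| - 1 / (2 * π) * a) = max 0 (|2 * π * ε| - a) := by
    rw [mul_max_of_nonneg _ _ (by positivity), mul_zero, abs_mul,
      abs_of_pos (by positivity : (0 : ℝ) < 2 * π)]
    congr 1
    field_simp
  rw [integral_log_sqrt_norm_one_sub_sq_mul_sin_sq (arsinh_nonneg_iff.mpr (by positivity)) hcosh,
    hlog, hscale]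
end

section
/- Let {α_n}_{n∈ℤ} ⊂ 𝔻 (the open unit disk) and ρ_n = √(1−|α_n|²). For any two sequences {ξ_n}, {ζ_n} of unimodular complex numbers, the generalized extended CMV matrices ℰ^ξ and ℰ^ζ built from Verblunsky pairs (α_n, ξ_n ρ_n) and (α_n, ζ_n ρ_n) respectively are unitarily equivalent via a diagonal unitary: there exists a diagonal unitary D on ℓ²(ℤ) with ℰ^ξ = D* ℰ^ζ D. -/
/-!
A diagonal unitary `D = diag(d_n)` acts on a generalized extended CMV matrix as a gauge
transformation: `D* ℰ(α, ρ) D = ℰ(α, ρ')` with `ρ'_k = conj(d_k) d_{k+1} ρ_k`, while the `α`'s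
are untouched. So it suffices to find unimodular `d` with `d_{k+1} / d_k = ξ_k / ζ_k`, and the
partial products of `ξ_k / ζ_k` in the circle group do this.
-/

open Complex ComplexConjugate

/-- The `(m,n)` matrix entry of the generalized extended CMV matrix `ℰ = ℒℳ` built from
Verblunsky pairs `(α_k, ρ_k)`, where `ℒ = ⊕ Θ(α_{2n},ρ_{2n})` acts on `span{δ_{2n},δ_{2n+1}}`,
`ℳ = ⊕ Θ(α_{2n+1},ρ_{2n+1})` acts on `span{δ_{2n+1},δ_{2n+2}}`, and
`Θ(α,ρ) = [[conj α, ρ],[conj ρ, -α]]`. -/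
def GECMVentry (α ρ : ℤ → ℂ) (m n : ℤ) : ℂ :=
  if Even m then
    if n = m - 1 then conj (α m) * conj (ρ (m - 1))
    else if n = m then -(conj (α m) * α (m - 1))
    else if n = m + 1 then ρ m * conj (α (m + 1))
    else if n = m + 2 then ρ m * ρ (m + 1)
    else 0
  else
    if n = m - 2 then conj (ρ (m - 1)) * conj (ρ (m - 2))
    else if n = m - 1 then -(conj (ρ (m - 1)) * α (m - 2))
    else if n = m then -(α (m - 1) * conj (α m))
    else if n = m + 1 then -(α (m - 1) * ρ m)
    else 0

open Finset

/-- `∏_{0 ≤ k < n} u k`, extended to `n < 0` so that the recursion of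
`intPartialProd_add_one` holds on all of `ℤ`. -/
def intPartialProd {G : Type*} [CommGroup G] (u : ℤ → G) : ℤ → G
  | .ofNat n => ∏ k ∈ range n, u k
  | .negSucc n => (∏ k ∈ range (n + 1), u (.negSucc k))⁻¹

theorem intPartialProd_add_one {G : Type*} [CommGroup G] (u : ℤ → G) (n : ℤ) :
    intPartialProd u (n + 1) = intPartialProd u n * u n := by
  match n with
  | .ofNat n => exact prod_range_succ _ n
  | .negSucc 0 => simp [intPartialProd]
  | .negSucc (n + 1) =>
    simp only [intPartialProd, prod_range_succ _ (n + 1), mul_inv, inv_mul_cancel_right]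
    rfl

theorem GECMVentry_gauge (α ρ : ℤ → ℂ) (d : ℤ → Circle) (m n : ℤ) :
    GECMVentry α (fun k => ↑((d k)⁻¹ * d (k + 1)) * ρ k) m n
      = conj (d m : ℂ) * GECMVentry α ρ m n * d n := by
  simp only [GECMVentry]
  split_ifs <;> subst_vars <;>
    simp only [map_mul, map_inv₀, Circle.coe_mul, Circle.coe_inv, ← Circle.coe_inv_eq_conj,
      inv_inv] <;>
    field_simp <;> ring_nf

theorem stmt3_general (α ξ ζ : ℤ → ℂ)
    (hξ : ∀ n, ‖ξ n‖ = 1) (hζ : ∀ n, ‖ζ n‖ = 1) :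
    ∃ d : ℤ → ℂ, (∀ n, ‖d n‖ = 1) ∧
      ∀ m n : ℤ,
        GECMVentry α (fun k => ξ k * (Real.sqrt (1 - ‖α k‖^2) : ℝ)) m n
          = conj (d m) *
            GECMVentry α (fun k => ζ k * (Real.sqrt (1 - ‖α k‖^2) : ℝ)) m n
            * d n := by
  let ξ' : ℤ → Circle := fun k => ⟨ξ k, mem_sphere_zero_iff_norm.2 (hξ k)⟩
  let ζ' : ℤ → Circle := fun k => ⟨ζ k, mem_sphere_zero_iff_norm.2 (hζ k)⟩
  obtain ⟨d, hd⟩ : ∃ d : ℤ → Circle, ∀ k, (d k)⁻¹ * d (k + 1) = ξ' k / ζ' k :=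
    ⟨intPartialProd (ξ' / ζ'), fun k => by rw [intPartialProd_add_one, inv_mul_cancel_left]; rfl⟩
  refine ⟨fun n => d n, fun n => Circle.norm_coe _, fun m n => ?_⟩
  rw [← GECMVentry_gauge]
  congr 1
  funext k
  have hζk : ζ k ≠ 0 := Circle.coe_ne_zero (ζ' k)
  rw [hd, Circle.coe_div]
  change _ = ξ k / ζ k * _
  field_simp

/-- Any two GECMV matrices with the same Verblunsky `α`'s (and `ρ`'s differing only by
unimodular phases `ξ_n`, `ζ_n`) are unitarily equivalent via a diagonal unitary
`D = diag(d_n)`; entrywise, `ℰ^ξ(m,n) = conj(d_m) ℰ^ζ(m,n) d_n`. -/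
theorem stmt3 (α ξ ζ : ℤ → ℂ) (hα : ∀ n, ‖α n‖ < 1)
    (hξ : ∀ n, ‖ξ n‖ = 1) (hζ : ∀ n, ‖ζ n‖ = 1) :
    ∃ d : ℤ → ℂ, (∀ n, ‖d n‖ = 1) ∧
      ∀ m n : ℤ,
        GECMVentry α (fun k => ξ k * (Real.sqrt (1 - ‖α k‖^2) : ℝ)) m n
          = conj (d m) *
            GECMVentry α (fun k => ζ k * (Real.sqrt (1 - ‖α k‖^2) : ℝ)) m n
            * d n :=
  stmt3_general α ξ ζ hξ hζ
end

section
/- Let w(θ+iε) = √(1 − λ₂² sin²(2π(θ+iε))) for λ₂ ∈ (0,1]. Then w extends analytically (and is nonvanishing) on the strip |ε| < (1/(2π))·arcsinh(√(λ₂^{−2} − 1)); equivalently, 1 − λ₂² sin²(2πz) ≠ 0 for all complex z with |Im z| < (1/(2π))·arcsinh(λ₂'/λ₂), where λ₂' = √(1−λ₂²). -/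
open Real Complex

/-!
On the line `Im w = y` one has `|sin w|² = sin² (Re w) + sinh² y ≤ cosh² y`. A zero of
`1 - λ² sin² w` forces `|sin w| = 1/λ`, hence `|Im w| ≥ arcosh (1/λ)`, and
`arcosh (1/λ) = arsinh (√(1 - λ²)/λ)` because both have `sinh` equal to `√(1 - λ²)/λ`.
-/

namespace Complex

theorem normSq_sin (w : ℂ) : normSq (sin w) = Real.sin w.re ^ 2 + Real.sinh w.im ^ 2 := by
  have h : normSq (sin w) = (Real.sin w.re * Real.cosh w.im) ^ 2
      + (Real.cos w.re * Real.sinh w.im) ^ 2 := by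
    rw [sin_eq, ← ofReal_sin, ← ofReal_cos, ← ofReal_sinh, ← ofReal_cosh, ← ofReal_mul,
      ← ofReal_mul, normSq_add_mul_I]
  rw [h, mul_pow, mul_pow, Real.cosh_sq]
  nlinarith [Real.sin_sq_add_cos_sq w.re]

theorem norm_sin_le_cosh_im (w : ℂ) : ‖sin w‖ ≤ Real.cosh w.im := by
  refine (pow_le_pow_iff_left₀ (norm_nonneg _) (Real.cosh_pos _).le two_ne_zero).1 ?_
  rw [← normSq_eq_norm_sq, normSq_sin, Real.cosh_sq]
  nlinarith [Real.sin_sq_le_one w.re]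

theorem arcosh_norm_sin_le_abs_im {w : ℂ} (hw : sin w ≠ 0) : arcosh ‖sin w‖ ≤ |w.im| := by
  calc arcosh ‖sin w‖ ≤ arcosh (Real.cosh |w.im|) :=
        (arcosh_le_arcosh (norm_pos_iff.2 hw) (Real.cosh_pos _)).2
          ((norm_sin_le_cosh_im w).trans_eq (Real.cosh_abs _).symm)
    _ = |w.im| := arcosh_cosh (abs_nonneg _)

end Complex

theorem Real.arsinh_sqrt_one_sub_sq_div {l : ℝ} (hl : 0 < l) (hl1 : l ≤ 1) :
    arsinh (√(1 - l ^ 2) / l) = arcosh l⁻¹ := by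
  have h1 : 1 ≤ l⁻¹ := one_le_inv_iff₀.2 ⟨hl, hl1⟩
  rw [← arsinh_sinh (arcosh l⁻¹), sinh_arcosh h1, inv_pow,
    show (l ^ 2)⁻¹ - 1 = (1 - l ^ 2) / l ^ 2 by field_simp, sqrt_div' _ (sq_nonneg l),
    sqrt_sq hl.le]

/-- For `λ₂ ∈ (0,1]`, the function `1 - λ₂² sin²(2πz)` does not vanish on the strip
`|Im z| < (1/2π) arcsinh(λ₂'/λ₂)` with `λ₂' = √(1-λ₂²)`; equivalently
`w = √(1 - λ₂² sin²(2π·))` extends analytically and nonvanishingly to this strip. -/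
theorem stmt13 (lam2 : ℝ) (h : lam2 ∈ Set.Ioc (0:ℝ) 1) (z : ℂ)
    (hz : |z.im| < (1 / (2 * Real.pi)) * Real.arsinh (Real.sqrt (1 - lam2^2) / lam2)) :
    1 - (lam2 : ℂ)^2 * (Complex.sin (2 * Real.pi * z))^2 ≠ 0 := by
  obtain ⟨hl0, hl1⟩ := h
  intro hzero
  set w : ℂ := 2 * Real.pi * z
  have hnorm : ‖Complex.sin w‖ = lam2⁻¹ := by
    have hsq : ((lam2 : ℂ) * Complex.sin w) ^ 2 = 1 := by linear_combination -hzero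
    have hprod : ‖(lam2 : ℂ) * Complex.sin w‖ = 1 :=
      (pow_eq_one_iff_of_nonneg (norm_nonneg _) two_ne_zero).1 (by rw [← norm_pow, hsq, norm_one])
    rw [norm_mul, Complex.norm_real, Real.norm_of_nonneg hl0.le] at hprod
    exact eq_inv_of_mul_eq_one_right hprod
  have him : |w.im| = 2 * π * |z.im| := by
    simp [w, abs_mul, abs_of_pos Real.pi_pos]
  have hbound := Complex.arcosh_norm_sin_le_abs_im (w := w)
    (by simp [← norm_ne_zero_iff, hnorm, hl0.ne'])
  rw [hnorm, ← arsinh_sqrt_one_sub_sq_div hl0 hl1, him] at hbound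
  rw [one_div, inv_mul_eq_div, lt_div_iff₀' two_pi_pos] at hz
  linarith
end

section
/- Fix λ₂ ∈ (0,1) and λ₂' = √(1−λ₂²). Then ∫₀¹ log|λ₂ cos(2πθ) − i λ₂'| dθ = log((1+λ₂')/2). Consequently, for λ₁ ∈ (0,1), ∫₀¹ log|ρ₃(θ) ρ₂ ρ₁ ρ₀| dθ = log(λ₁²(1+λ₂')/2), where ρ₃(θ) = λ₂ cos(2πθ) − iλ₂', ρ₂ = ρ₀ = λ₁, ρ₁ = −i. -/
/-!
On the unit circle, with `z = exp (2πiθ)` and `λ₂' = √(1 - λ₂²)`,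
`λ₂ cos (2πθ) - iλ₂' = (λ₂ / 2) z⁻¹ (z - a) (z - b)`, where `a = i(1 + λ₂')/λ₂` and
`b = i(λ₂' - 1)/λ₂` are the roots of `z² - (2iλ₂'/λ₂) z + 1`. Since `ab = 1` and `|a| > 1`,
Jensen's formula `⨍ log |z - a| = log⁺ |a|` gives
`log (λ₂/2) + log ((1 + λ₂')/λ₂) = log ((1 + λ₂')/2)`. The second identity only multiplies the
integrand by a constant of modulus `λ₁²`.
-/

open Real Metric

lemma ofReal_mul_re_sub_eq_mul_sub_mul_sub {z a b w : ℂ} {t : ℝ} (hz : ‖z‖ = 1)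
    (hab : a * b = 1) (hw : t * (a + b) = 2 * w) :
    (t * z.re : ℂ) - w = t / 2 * z⁻¹ * ((z - a) * (z - b)) := by
  have hz0 : z ≠ 0 := norm_ne_zero_iff.1 (by rw [hz]; exact one_ne_zero)
  rw [Complex.re_eq_add_conj, ← Complex.inv_eq_conj hz]
  field_simp
  linear_combination (-(t:ℂ)) * hab + z * hw

lemma circleAverage_log_norm_ofReal_mul_re_sub {a b w : ℂ} {t : ℝ} (ht : 0 < t) (hw₀ : w.im ≠ 0)
    (hab : a * b = 1) (hw : t * (a + b) = 2 * w) :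
    circleAverage (fun z ↦ log ‖(t * z.re : ℂ) - w‖) 0 1 = log (t / 2) + log⁺ ‖a‖ + log⁺ ‖b‖ := by
  have hsplit : Set.EqOn (fun z ↦ log ‖(t * z.re : ℂ) - w‖)
      (fun z ↦ log (t / 2) + log ‖z - a‖ + log ‖z - b‖) (sphere 0 |1|) := by
    intro z hz
    have hz1 : ‖z‖ = 1 := by simpa using hz
    have hne : (t * z.re : ℂ) - w ≠ 0 := fun h ↦ hw₀ (by simpa using congrArg Complex.im h)
    simp only
    rw [ofReal_mul_re_sub_eq_mul_sub_mul_sub hz1 hab hw] at hne ⊢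
    have hza : z - a ≠ 0 := fun h ↦ hne (by rw [h]; ring)
    have hzb : z - b ≠ 0 := fun h ↦ hne (by rw [h]; ring)
    have ht2 : ‖(t / 2 : ℂ)‖ = t / 2 := by
      rw [norm_div, Complex.norm_real, norm_of_nonneg ht.le]; norm_num
    simp only [norm_mul, norm_inv, hz1, inv_one, mul_one, ht2]
    rw [log_mul (by positivity) (by positivity), log_mul (by positivity) (by positivity), add_assoc]
  rw [circleAverage_congr_sphere hsplit, circleAverage_fun_add (by fun_prop) (by fun_prop),
    circleAverage_fun_add (by fun_prop) (by fun_prop), circleAverage_const,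
    circleAverage_log_norm_sub_const_eq_posLog, circleAverage_log_norm_sub_const_eq_posLog]

lemma integral_comp_circleMap_two_pi_mul_eq_circleAverage (f : ℂ → ℝ) :
    ∫ θ in (0:ℝ)..1, f (circleMap 0 1 (2 * π * θ)) = circleAverage f 0 1 := by
  rw [intervalIntegral.integral_comp_mul_left (fun x ↦ f (circleMap 0 1 x)) (by positivity),
    circleAverage_def]
  simp

lemma integral_log_norm_mul_cos_sub {a b w : ℂ} {t : ℝ} (ht : 0 < t) (hw₀ : w.im ≠ 0)
    (hab : a * b = 1) (hw : t * (a + b) = 2 * w) :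
    ∫ θ in (0:ℝ)..1, log ‖((t * cos (2 * π * θ) : ℝ) : ℂ) - w‖
      = log (t / 2) + log⁺ ‖a‖ + log⁺ ‖b‖ := by
  rw [← circleAverage_log_norm_ofReal_mul_re_sub ht hw₀ hab hw,
    ← integral_comp_circleMap_two_pi_mul_eq_circleAverage]
  refine intervalIntegral.integral_congr fun θ _ ↦ ?_
  rw [circleMap_zero, Complex.ofReal_one, one_mul, Complex.exp_ofReal_mul_I_re,
    Complex.ofReal_mul]

lemma integral_log_norm_mul_cos_sub_sqrt_mul_I {t : ℝ} (ht : 0 < t) (ht1 : t < 1) :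
    ∫ θ in (0:ℝ)..1, log ‖((t * cos (2 * π * θ) : ℝ) : ℂ) - (√(1 - t ^ 2) : ℝ) * Complex.I‖
      = log ((1 + √(1 - t ^ 2)) / 2) := by
  set c := √(1 - t ^ 2)
  have hc2 : c ^ 2 = 1 - t ^ 2 := sq_sqrt (by nlinarith)
  have hc0 : 0 < c := sqrt_pos.2 (by nlinarith)
  have hc1 : c < 1 := by nlinarith
  have hct : 1 - c ≤ t := by nlinarith
  have ht0 : (t : ℂ) ≠ 0 := by exact_mod_cast ht.ne'
  have hab : (Complex.I * (1 + c : ℝ) / t) * (Complex.I * (c - 1 : ℝ) / t) = 1 := by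
    have : (c : ℂ) ^ 2 = 1 - t ^ 2 := by exact_mod_cast hc2
    field_simp
    push_cast
    linear_combination (-1 : ℂ) * this + ((c : ℂ) ^ 2 - 1) * Complex.I_sq
  have hw : (t : ℂ) * (Complex.I * (1 + c : ℝ) / t + Complex.I * (c - 1 : ℝ) / t)
      = 2 * (c * Complex.I) := by
    field_simp
    push_cast
    ring
  have hnorm (x : ℝ) : ‖Complex.I * x / t‖ = |x| / t := by
    rw [norm_div, norm_mul, Complex.norm_I, one_mul, Complex.norm_real, Complex.norm_real,
      norm_eq_abs, norm_of_nonneg ht.le]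
  have ha : 1 ≤ |(1 + c) / t| := by
    rw [abs_of_pos (by positivity)]; exact (one_le_div ht).2 (by linarith)
  have hb : |-(c - 1) / t| ≤ 1 := by
    rw [abs_of_nonneg (div_nonneg (by linarith) ht.le)]; exact (div_le_one ht).2 (by linarith)
  rw [integral_log_norm_mul_cos_sub ht (by simpa using hc0.ne') hab hw, hnorm, hnorm,
    abs_of_pos (by positivity), abs_of_nonpos (by linarith), posLog_eq_log ha,
    (posLog_eq_zero_iff _).2 hb, add_zero, ← log_mul (by positivity) (by positivity)]
  congr 1
  field_simp

lemma integral_log_norm_mul_const {f : ℝ → ℂ} {a b : ℝ}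
    (hf : IntervalIntegrable (fun x ↦ log ‖f x‖) MeasureTheory.volume a b) (hf₀ : ∀ x, f x ≠ 0)
    {u : ℂ} (hu : u ≠ 0) :
    ∫ x in a..b, log ‖f x * u‖ = (b - a) * log ‖u‖ + ∫ x in a..b, log ‖f x‖ := by
  have hsplit : ∀ x, log ‖f x * u‖ = log ‖f x‖ + log ‖u‖ := fun x ↦ by
    rw [norm_mul, log_mul (norm_ne_zero_iff.2 (hf₀ x)) (norm_ne_zero_iff.2 hu)]
  simp only [hsplit]
  rw [intervalIntegral.integral_add hf intervalIntegrable_const, intervalIntegral.integral_const,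
    smul_eq_mul, add_comm]

/-- `∫₀¹ log|λ₂ cos(2πθ) - iλ₂'| dθ = log((1+λ₂')/2)`, and consequently
`∫₀¹ log|ρ₃(θ)ρ₂ρ₁ρ₀| dθ = log(λ₁²(1+λ₂')/2)` where `ρ₃(θ) = λ₂cos(2πθ) - iλ₂'`,
`ρ₂ = ρ₀ = λ₁`, `ρ₁ = -i`. -/
theorem stmt14 (lam1 lam2 : ℝ) (h1 : lam1 ∈ Set.Ioo (0:ℝ) 1) (h2 : lam2 ∈ Set.Ioo (0:ℝ) 1) :
    (∫ θ in (0:ℝ)..1,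
        Real.log ((Norm.norm (E := ℂ))
          ((lam2 * Real.cos (2 * Real.pi * θ) : ℝ) - (Real.sqrt (1 - lam2^2) : ℝ) * Complex.I)))
      = Real.log ((1 + Real.sqrt (1 - lam2^2)) / 2) ∧
    (∫ θ in (0:ℝ)..1,
        Real.log ((Norm.norm (E := ℂ))
          ((((lam2 * Real.cos (2 * Real.pi * θ) : ℝ) - (Real.sqrt (1 - lam2^2) : ℝ) * Complex.I)
              * (lam1 : ℂ)) * (-Complex.I) * (lam1 : ℂ))))
      = Real.log (lam1^2 * (1 + Real.sqrt (1 - lam2^2)) / 2) := by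
  obtain ⟨hl1, -⟩ := h1
  obtain ⟨hl2, hl2'⟩ := h2
  have hρ := integral_log_norm_mul_cos_sub_sqrt_mul_I hl2 hl2'
  refine ⟨hρ, ?_⟩
  have hρ₀ (θ : ℝ) :
      ((lam2 * cos (2 * π * θ) : ℝ) : ℂ) - (√(1 - lam2 ^ 2) : ℝ) * Complex.I ≠ 0 := fun h ↦
    (sqrt_pos.2 (by nlinarith : 0 < 1 - lam2 ^ 2)).ne' (by
      simpa only [Complex.sub_im, Complex.ofReal_im, Complex.mul_im, Complex.I_im, Complex.I_re,
        Complex.ofReal_re, Complex.zero_im, mul_one, mul_zero, add_zero, zero_sub, neg_eq_zero]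
        using congrArg Complex.im h)
  have hρ_int : IntervalIntegrable (fun θ : ℝ ↦ log
      ‖((lam2 * cos (2 * π * θ) : ℝ) : ℂ) - (√(1 - lam2 ^ 2) : ℝ) * Complex.I‖)
      MeasureTheory.volume 0 1 :=
    ((Continuous.norm (by fun_prop)).log fun θ ↦ norm_ne_zero_iff.2 (hρ₀ θ)).intervalIntegrable 0 1
  have hscale : ‖(lam1 : ℂ) * -Complex.I * lam1‖ = lam1 ^ 2 := by
    rw [norm_mul, norm_mul, norm_neg, Complex.norm_I, Complex.norm_real, norm_of_nonneg hl1.le]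
    ring
  have hassoc (z : ℂ) : z * lam1 * -Complex.I * lam1 = z * (lam1 * -Complex.I * lam1) := by ring
  simp only [hassoc]
  rw [integral_log_norm_mul_const hρ_int hρ₀ (by simp [hl1.ne']), hscale, hρ, sub_zero, one_mul,
    ← log_mul (by positivity) (by positivity), mul_div_assoc]
end
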